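/- arXiv:2010.05231 — 6 statements merged into one kernel-verified Lean document; each statement's English description precedes it below -/
import Mathlib

section
/- (Conversion Principle) Let g : {1,2,...} → ℝ be any function with g(1) = 1. Then for all integers n ≥ 1 and 1 ≤ m ≤ n one has A_{n,m}^{g,id} = (1/m!) · A_{n,m}^{g̃,1}. -/
/-!
With `G̃(t) = ∑_{k ≥ 1} g(k)/k · tᵏ`, both sides are coefficients of `G̃ᵐ`. The recursion
defining `A^{g̃,1}` is the convolution recursion `[tⁿ] G̃ᵐ⁺¹ = ∑ₖ g̃(k) [tⁿ⁻ᵏ] G̃ᵐ`, so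
`A^{g̃,1}_{n,m} = [tⁿ] G̃ᵐ`. Since `t G̃'(t) = ∑ g(k) tᵏ`, differentiating `G̃ᵐ⁺¹` gives
`n [tⁿ] G̃ᵐ⁺¹ = (m+1) ∑ₖ g(k) [tⁿ⁻ᵏ] G̃ᵐ`: the numbers `[tⁿ] G̃ᵐ / m!` satisfy the recursion
defining `A^{g,id}`. Since that recursion determines the whole table, `A^{g,id}_{n,m} = [tⁿ] G̃ᵐ / m!`.
-/

/-- The polynomials `P_n^{g,h}` defined by `P_0 = 1` and
`P_n(x) = (x / h(n)) * ∑_{k=1}^n g(k) P_{n-k}(x)` for `n ≥ 1`. -/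
noncomputable def HVP (g h : ℕ → ℝ) : ℕ → Polynomial ℝ
  | 0 => 1
  | (n + 1) =>
      Polynomial.C (h (n + 1))⁻¹ * Polynomial.X *
        ∑ k ∈ (Finset.Icc 1 (n + 1)).attach, Polynomial.C (g k.1) * HVP g h (n + 1 - k.1)
  decreasing_by
    have := (Finset.mem_Icc.mp k.2).1
    omega

/-- `A_{n,m}^{g,h}`, the coefficient of `x^m` in `P_n^{g,h}(x)`.
(It vanishes automatically unless `1 ≤ m ≤ n`, except `A_{0,0} = 1`.) -/
noncomputable def HVA (g h : ℕ → ℝ) (n m : ℕ) : ℝ := (HVP g h n).coeff m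

open Finset PowerSeries

section Recursion

variable (g h : ℕ → ℝ)

theorem HVA_zero_left (m : ℕ) : HVA g h 0 m = if m = 0 then 1 else 0 := by
  rw [HVA, HVP, Polynomial.coeff_one]

theorem HVA_succ_zero (n : ℕ) : HVA g h (n + 1) 0 = 0 := by
  simp [HVA, HVP, mul_assoc]

theorem HVA_succ_succ (n m : ℕ) :
    HVA g h (n + 1) (m + 1) = (h (n + 1))⁻¹ * ∑ k ∈ range (n + 1), g (k + 1) * HVA g h (n - k) m := by
  rw [HVA, HVP, mul_assoc, Polynomial.coeff_C_mul, Polynomial.coeff_X_mul,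
    Polynomial.finsetSum_coeff, sum_attach (Icc 1 (n + 1)) fun k => (Polynomial.C (g k) *
      HVP g h (n + 1 - k)).coeff m, ← Ico_add_one_right_eq_Icc, sum_Ico_eq_sum_range]
  simp only [Polynomial.coeff_C_mul, Nat.add_sub_cancel, HVA, add_comm 1, Nat.add_sub_add_right]

theorem HVA_eq_of_recursion (a : ℕ → ℕ → ℝ) (h_zero_left : ∀ m, a 0 m = if m = 0 then 1 else 0)
    (h_succ_zero : ∀ n, a (n + 1) 0 = 0)
    (h_succ_succ : ∀ n m,
      a (n + 1) (m + 1) = (h (n + 1))⁻¹ * ∑ k ∈ range (n + 1), g (k + 1) * a (n - k) m) :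
    HVA g h = a := by
  funext n
  induction n using Nat.strong_induction_on with
  | _ n ih =>
    funext m
    rcases n with _ | n
    · rw [HVA_zero_left, h_zero_left]
    rcases m with _ | m
    · rw [HVA_succ_zero, h_succ_zero]
    rw [HVA_succ_succ, h_succ_succ]
    refine congrArg _ (sum_congr rfl fun k hk => ?_)
    rw [ih (n - k) (by have := mem_range.mp hk; omega)]

end Recursion

section PowerSeries

variable {R : Type*} [CommSemiring R]

theorem PowerSeries.coeff_succ_mul_of_constantCoeff_eq_zero {f : R⟦X⟧} (hf : constantCoeff f = 0)
    (F : R⟦X⟧) (n : ℕ) :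
    coeff (n + 1) (f * F) = ∑ k ∈ range (n + 1), coeff (k + 1) f * coeff (n - k) F := by
  rw [coeff_mul, Nat.sum_antidiagonal_eq_sum_range_succ_mk, sum_range_succ']
  simp [hf, Nat.add_sub_add_right]

/-- Euler's identity `t · (fᵐ⁺¹)' = (m+1) fᵐ · t f'`, read off at `tⁿ⁺¹`. -/
theorem PowerSeries.succ_mul_coeff_succ_pow_succ (f : R⟦X⟧) (n m : ℕ) :
    (n + 1) * coeff (n + 1) (f ^ (m + 1)) =
      (m + 1) * ∑ k ∈ range (n + 1), ((k + 1) * coeff (k + 1) f) * coeff (n - k) (f ^ m) := by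
  have hD : d⁄dX R (f ^ (m + 1)) = (m + 1) • (d⁄dX R f * f ^ m) := by
    rw [Derivation.leibniz_pow, Nat.add_sub_cancel, smul_eq_mul, mul_comm]
  have := congrArg (coeff n) hD
  rw [coeff_derivative, map_nsmul, coeff_mul, Nat.sum_antidiagonal_eq_sum_range_succ_mk] at this
  simp only [coeff_derivative, nsmul_eq_mul, Nat.cast_add, Nat.cast_one] at this
  rw [mul_comm, this]
  simp only [mul_comm (coeff _ f)]

end PowerSeries

/-- `G̃(t) = ∑_{k ≥ 1} g(k)/k · tᵏ`; the coefficient of `t⁰` is `g 0 / 0 = 0`. -/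
noncomputable def tildeSeries (g : ℕ → ℝ) : ℝ⟦X⟧ :=
  PowerSeries.mk fun k => g k / k

theorem constantCoeff_tildeSeries (g : ℕ → ℝ) : constantCoeff (tildeSeries g) = 0 := by
  simp [tildeSeries, ← coeff_zero_eq_constantCoeff_apply]

theorem succ_mul_coeff_succ_tildeSeries (g : ℕ → ℝ) (k : ℕ) :
    (k + 1) * coeff (k + 1) (tildeSeries g) = g (k + 1) := by
  rw [tildeSeries, coeff_mk, Nat.cast_add_one, mul_div_cancel₀ _ (Nat.cast_add_one_ne_zero k)]

theorem HVA_tilde_one_eq_coeff_pow (g : ℕ → ℝ) :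
    HVA (fun k => g k / k) (fun _ => 1) = fun n m => coeff n (tildeSeries g ^ m) := by
  refine HVA_eq_of_recursion _ _ _ (fun m => ?_) (fun n => ?_) (fun n m => ?_)
  · simp [coeff_zero_eq_constantCoeff_apply, constantCoeff_tildeSeries, zero_pow_eq]
  · simp
  · rw [pow_succ', coeff_succ_mul_of_constantCoeff_eq_zero (constantCoeff_tildeSeries g),
      inv_one, one_mul]
    simp [tildeSeries]

theorem HVA_id_eq_coeff_pow_div_factorial (g : ℕ → ℝ) :
    HVA g (fun k => k) = fun n m => coeff n (tildeSeries g ^ m) / (m.factorial : ℝ) := by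
  refine HVA_eq_of_recursion _ _ _ (fun m => ?_) (fun n => ?_) (fun n m => ?_)
  · rcases m with _ | m <;>
      simp [coeff_zero_eq_constantCoeff_apply, constantCoeff_tildeSeries]
  · simp
  · have euler := succ_mul_coeff_succ_pow_succ (tildeSeries g) n m
    simp only [succ_mul_coeff_succ_tildeSeries] at euler
    simp only [← mul_div_assoc, ← sum_div, Nat.factorial_succ]
    push_cast
    field_simp
    linear_combination euler

theorem conversion_principle_general (g : ℕ → ℝ) (n m : ℕ) :
    HVA g (fun k => (k : ℝ)) n m
      = (1 / (Nat.factorial m : ℝ)) * HVA (fun k => g k / (k : ℝ)) (fun _ => 1) n m := by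
  rw [HVA_id_eq_coeff_pow_div_factorial, HVA_tilde_one_eq_coeff_pow, one_div_mul_eq_div]

/-- **Conversion Principle.** For any `g` with `g(1) = 1`, for all `1 ≤ m ≤ n`,
`A_{n,m}^{g,id} = (1/m!) · A_{n,m}^{g̃,1}` where `g̃(n) = g(n)/n`. -/
theorem conversion_principle (g : ℕ → ℝ) (hg1 : g 1 = 1)
    (n m : ℕ) (hn : 1 ≤ n) (hm : 1 ≤ m) (hmn : m ≤ n) :
    HVA g (fun k => (k : ℝ)) n m
      = (1 / (Nat.factorial m : ℝ)) * HVA (fun k => g k / (k : ℝ)) (fun _ => 1) n m :=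
  conversion_principle_general g n m
end

section
/- Let g : {1,2,...} → ℝ be a function with g(1) = 1 and g(n) > 0 for all n. Fix n ≥ 1. If the coefficient sequence of P_n^{g̃,1}(x) is log-concave (i.e., (A_{n,m}^{g̃,1})² ≥ A_{n,m-1}^{g̃,1} · A_{n,m+1}^{g̃,1} for all 1 ≤ m ≤ n, with coefficients outside 1 ≤ m ≤ n taken to be 0), then the coefficient sequence of P_n^{g,id}(x) is log-concave. -/
open Finset PowerSeries
open scoped Nat

section Recurrence

variable (g h : ℕ → ℝ)

lemma HVA_zero_right (n : ℕ) : HVA g h n 0 = if n = 0 then 1 else 0 := by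
  cases n with
  | zero => simp [HVA, HVP]
  | succ n =>
    rw [HVA, HVP, mul_assoc, Polynomial.coeff_C_mul, Polynomial.mul_coeff_zero]
    simp

/-- For `n = 0` both sides vanish, whatever the junk value `(h 0)⁻¹`. -/
lemma HVA_succ_right (n m : ℕ) :
    HVA g h n (m + 1) = (h n)⁻¹ * ∑ k ∈ Icc 1 n, g k * HVA g h (n - k) m := by
  cases n with
  | zero => simp [HVA, HVP, Polynomial.coeff_one]
  | succ n =>
    rw [HVA, HVP, mul_assoc, Polynomial.coeff_C_mul, Polynomial.coeff_X_mul,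
      Polynomial.finsetSum_coeff, ← sum_attach (Icc 1 (n + 1))]
    simp [HVA, Polynomial.coeff_C_mul]

end Recurrence

section PowerSeries

variable {R : Type*} [CommSemiring R]

lemma coeff_mul_eq_sum_Icc {p : R⟦X⟧} (hp : constantCoeff p = 0) (q : R⟦X⟧) (n : ℕ) :
    coeff n (p * q) = ∑ k ∈ Icc 1 n, coeff k p * coeff (n - k) q := by
  rw [coeff_mul, Nat.sum_antidiagonal_eq_sum_range_succ (fun i j => coeff i p * coeff j q),
    range_eq_Ico, sum_eq_sum_Ico_succ_bot n.succ_pos, coeff_zero_eq_constantCoeff_apply, hp,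
    zero_mul, zero_add]
  rfl

lemma coeff_X_mul_derivative (f : R⟦X⟧) (n : ℕ) :
    coeff n (X * d⁄dX R f) = n * coeff n f := by
  cases n with
  | zero => simp
  | succ n => rw [coeff_succ_X_mul, coeff_derivative, mul_comm]; push_cast; rfl

lemma coeff_X_mul_derivative_pow (f : R⟦X⟧) (n m : ℕ) :
    n * coeff n (f ^ (m + 1)) = (m + 1) * coeff n (X * d⁄dX R f * f ^ m) := by
  rw [← coeff_X_mul_derivative, derivative_pow, Nat.add_sub_cancel, ← coeff_C_mul]
  congr 1
  simp only [map_add, map_natCast, map_one]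
  push_cast
  ring

end PowerSeries

lemma HVA_one_eq_coeff_pow {g : ℕ → ℝ} (hg : g 0 = 0) (n m : ℕ) :
    HVA g (fun _ => 1) n m = coeff n (mk g ^ m) := by
  induction m generalizing n with
  | zero => simp [HVA_zero_right, coeff_one]
  | succ m ih =>
    rw [HVA_succ_right, inv_one, one_mul, pow_succ', coeff_mul_eq_sum_Icc (by simp [hg])]
    simp only [coeff_mk, ih]

lemma factorial_mul_HVA_id (g : ℕ → ℝ) (n m : ℕ) :
    m ! * HVA g (fun k => k) n m = coeff n (mk (fun k => g k / k) ^ m) := by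
  induction m generalizing n with
  | zero => simp [HVA_zero_right, coeff_one]
  | succ m ih =>
    set G : ℝ⟦X⟧ := mk fun k => g k / k
    have hXG : ∀ k ∈ Icc 1 n, coeff k (X * d⁄dX ℝ G) = g k := by
      intro k hk
      have : (k : ℝ) ≠ 0 := Nat.cast_ne_zero.mpr (by simp only [mem_Icc] at hk; omega)
      rw [coeff_X_mul_derivative, coeff_mk]
      field_simp
    have hsum : (m + 1) * m ! * ∑ k ∈ Icc 1 n, g k * HVA g (fun k => k) (n - k) m =
        n * coeff n (G ^ (m + 1)) := by
      rw [coeff_X_mul_derivative_pow, coeff_mul_eq_sum_Icc (by simp), mul_assoc, mul_sum]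
      congr 1
      refine sum_congr rfl fun k hk => ?_
      rw [hXG k hk, ← ih]
      ring
    rcases eq_or_ne n 0 with rfl | hn
    · simp [HVA_succ_right, G, coeff_zero_eq_constantCoeff_apply]
    · rw [HVA_succ_right, Nat.factorial_succ, ← mul_right_inj' (Nat.cast_ne_zero.mpr hn),
        ← hsum]
      push_cast
      field_simp

lemma HVA_id_eq_div_factorial (g : ℕ → ℝ) (n m : ℕ) :
    HVA g (fun k => k) n m = HVA (fun k => g k / k) (fun _ => 1) n m / m ! := by
  rw [HVA_one_eq_coeff_pow (by simp), ← factorial_mul_HVA_id]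
  field_simp

lemma mul_mul_le_sq_mul {x y z x' y' z' : ℝ} (h : x * z ≤ y ^ 2) (h' : x' * z' ≤ y' ^ 2)
    (hxz' : 0 ≤ x' * z') : (x * x') * (z * z') ≤ (y * y') ^ 2 :=
  calc (x * x') * (z * z') = (x * z) * (x' * z') := by ring
    _ ≤ y ^ 2 * y' ^ 2 := mul_le_mul h h' hxz' (sq_nonneg y)
    _ = (y * y') ^ 2 := by ring

lemma inv_factorial_mul_inv_factorial_le_sq (m : ℕ) :
    ((m ! : ℝ)⁻¹ * ((m + 2) ! : ℝ)⁻¹) ≤ (((m + 1) ! : ℝ)⁻¹) ^ 2 := by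
  rw [← mul_inv, inv_pow, inv_le_inv₀ (by positivity) (by positivity)]
  simp only [Nat.factorial_succ]
  push_cast
  have : (0 : ℝ) < m ! := by positivity
  nlinarith

theorem logConcave_transfer_general (g : ℕ → ℝ) (n : ℕ)
    (H : ∀ m, 1 ≤ m →
      HVA (fun k => g k / (k : ℝ)) (fun _ => 1) n m ^ 2 ≥
        HVA (fun k => g k / (k : ℝ)) (fun _ => 1) n (m - 1) *
          HVA (fun k => g k / (k : ℝ)) (fun _ => 1) n (m + 1)) :
    ∀ m, 1 ≤ m →
      HVA g (fun k => (k : ℝ)) n m ^ 2 ≥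
        HVA g (fun k => (k : ℝ)) n (m - 1) * HVA g (fun k => (k : ℝ)) n (m + 1) := by
  intro m hm
  obtain ⟨m, rfl⟩ := Nat.exists_eq_add_of_le' hm
  have hB := H (m + 1) hm
  rw [Nat.add_sub_cancel] at hB ⊢
  simp only [HVA_id_eq_div_factorial, div_eq_mul_inv]
  exact mul_mul_le_sq_mul hB (inv_factorial_mul_inv_factorial_le_sq m) (by positivity)

/-- If the coefficient sequence of `P_n^{g̃,1}` is log-concave, then so is that of
`P_n^{g,id}` (coefficients outside `1 ≤ m ≤ n` are `0` automatically). -/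
theorem logConcave_transfer (g : ℕ → ℝ) (hg1 : g 1 = 1)
    (hgpos : ∀ k, 1 ≤ k → 0 < g k) (n : ℕ) (hn : 1 ≤ n)
    (H : ∀ m, 1 ≤ m →
      HVA (fun k => g k / (k : ℝ)) (fun _ => 1) n m ^ 2 ≥
        HVA (fun k => g k / (k : ℝ)) (fun _ => 1) n (m - 1) *
          HVA (fun k => g k / (k : ℝ)) (fun _ => 1) n (m + 1)) :
    ∀ m, 1 ≤ m →
      HVA g (fun k => (k : ℝ)) n m ^ 2 ≥
        HVA g (fun k => (k : ℝ)) n (m - 1) * HVA g (fun k => (k : ℝ)) n (m + 1) :=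
  logConcave_transfer_general g n H
end

section
/- For all 1 ≤ m ≤ n one has A_{n,m}^{id,id} = (1/m!) · C(n−1, m−1), where C(·,·) is the binomial coefficient; equivalently, P_n^{id,id}(x) = ∑_{m=1}^n (1/m!) C(n−1, m−1) x^m. -/
open Finset Polynomial

theorem Nat.sum_antidiagonal_choose_mul_choose (a b n : ℕ) :
    ∑ ij ∈ antidiagonal n, ij.1.choose a * ij.2.choose b = (n + 1).choose (a + b + 1) := by
  induction n generalizing b with
  | zero =>
    rcases a with _ | a <;> rcases b with _ | b <;> simp [Nat.choose_eq_zero_of_lt]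
  | succ n ih =>
    rw [Nat.sum_antidiagonal_succ']
    cases b with
    | zero =>
      have hockey := ih 0
      simp only [Nat.choose_zero_right, mul_one, add_zero] at hockey ⊢
      rw [hockey, Nat.choose_succ_succ' (n + 1)]
    | succ b =>
      simp only [Nat.choose_succ_succ' _ b, mul_add, sum_add_distrib, ih, Nat.choose_zero_succ,
        mul_zero, zero_add]
      rw [Nat.choose_succ_succ' (n + 1), add_assoc]

section Recurrence

variable (g h : ℕ → ℝ)

theorem HVP_succ (n : ℕ) :
    HVP g h (n + 1) =
      C (h (n + 1))⁻¹ * X * ∑ ij ∈ antidiagonal n, C (g (ij.1 + 1)) * HVP g h ij.2 := by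
  rw [HVP.eq_2, sum_attach (Icc 1 (n + 1)) fun k => C (g k) * HVP g h (n + 1 - k),
    Nat.sum_antidiagonal_eq_sum_range_succ fun i j => C (g (i + 1)) * HVP g h j,
    ← Ico_add_one_right_eq_Icc, sum_Ico_eq_sum_range]
  refine congrArg _ (sum_congr rfl fun i _ => ?_)
  rw [add_comm 1 i, Nat.add_sub_add_right]

theorem HVP_coeff_zero (n : ℕ) : (HVP g h n).coeff 0 = if n = 0 then 1 else 0 := by
  cases n with
  | zero => simp [HVP.eq_1]
  | succ n => simp [HVP_succ, mul_assoc]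

theorem HVP_coeff_succ (n m : ℕ) :
    (HVP g h (n + 1)).coeff (m + 1) =
      (h (n + 1))⁻¹ * ∑ ij ∈ antidiagonal n, g (ij.1 + 1) * (HVP g h ij.2).coeff m := by
  simp only [HVP_succ, mul_assoc, coeff_C_mul, coeff_X_mul, finsetSum_coeff]

end Recurrence

theorem Nat.sum_antidiagonal_add_one_mul_choose (r n : ℕ) :
    ∑ ij ∈ antidiagonal n, (ij.1 + 1) * ij.2.choose r = (n + 2).choose (r + 2) := by
  have h := Nat.sum_antidiagonal_choose_mul_choose 1 r (n + 1)
  rw [Nat.sum_antidiagonal_succ] at h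
  simpa [add_comm 1 r] using h

theorem HVP_id_coeff_succ (n m : ℕ) :
    (HVP (fun k => (k : ℝ)) (fun k => (k : ℝ)) (n + 1)).coeff (m + 1) =
      n.choose m / (m + 1).factorial := by
  induction n using Nat.strong_induction_on generalizing m with
  | _ n ih =>
  rw [HVP_coeff_succ]
  rcases n with _ | n
  · cases m <;> simp [HVP.eq_1, coeff_one]
  rw [Nat.sum_antidiagonal_succ']
  cases m with
  | zero =>
    simp only [Nat.cast_add, Nat.cast_one, HVP_coeff_zero, ↓reduceIte, mul_one, Nat.add_eq_zero_iff,
      one_ne_zero, and_false, mul_zero, sum_const_zero, add_zero, Nat.choose_zero_right, zero_add,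
      Nat.factorial_one, Nat.cast_one, div_one]
    exact inv_mul_cancel₀ (by positivity)
  | succ r =>
    have hsum : ∑ ij ∈ antidiagonal n, ((ij.1 + 1 : ℕ) : ℝ) *
        (HVP (fun k => (k : ℝ)) (fun k => (k : ℝ)) (ij.2 + 1)).coeff (r + 1)
        = (n + 2).choose (r + 2) / (r + 1).factorial := by
      rw [← Nat.sum_antidiagonal_add_one_mul_choose, Nat.cast_sum, sum_div]
      refine sum_congr rfl fun ij hij => ?_
      rw [ih ij.2 (by have := mem_antidiagonal.mp hij; omega)]
      push_cast
      ring
    rw [hsum, HVP.eq_1, coeff_one, if_neg (by omega), mul_zero, zero_add]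
    have hpascal :
        ((n + 2 : ℕ) : ℝ) * (n + 1).choose (r + 1) = (n + 2).choose (r + 2) * (r + 2) := by
      exact_mod_cast Nat.add_one_mul_choose_eq (n + 1) (r + 1)
    rw [Nat.factorial_succ (r + 1)]
    push_cast at hpascal ⊢
    field_simp
    linear_combination -hpascal

theorem HVP_id_coeff {n m : ℕ} (hn : 1 ≤ n) (hm : 1 ≤ m) :
    (HVP (fun k => (k : ℝ)) (fun k => (k : ℝ)) n).coeff m
      = (1 / (Nat.factorial m : ℝ)) * (Nat.choose (n - 1) (m - 1) : ℝ) := by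
  obtain ⟨n, rfl⟩ := Nat.exists_eq_add_of_le' hn
  obtain ⟨m, rfl⟩ := Nat.exists_eq_add_of_le' hm
  rw [HVP_id_coeff_succ, Nat.add_sub_cancel, Nat.add_sub_cancel, one_div_mul_eq_div]

/-- `A_{n,m}^{id,id} = (1/m!) · C(n-1, m-1)` for `1 ≤ m ≤ n`; equivalently
`P_n^{id,id}(x) = ∑_{m=1}^n (1/m!) C(n-1, m-1) x^m` for `n ≥ 1`. -/
theorem A_id_id :
    (∀ n m : ℕ, 1 ≤ m → m ≤ n →
      HVA (fun k => (k : ℝ)) (fun k => (k : ℝ)) n m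
        = (1 / (Nat.factorial m : ℝ)) * (Nat.choose (n - 1) (m - 1) : ℝ)) ∧
    (∀ n : ℕ, 1 ≤ n →
      HVP (fun k => (k : ℝ)) (fun k => (k : ℝ)) n
        = ∑ m ∈ Finset.Icc 1 n,
            Polynomial.C ((1 / (Nat.factorial m : ℝ)) * (Nat.choose (n - 1) (m - 1) : ℝ)) *
              Polynomial.X ^ m) := by
  refine ⟨fun n m hm hmn => HVP_id_coeff (hm.trans hmn) hm, fun n hn => ?_⟩
  ext m
  simp only [finsetSum_coeff, coeff_C_mul_X_pow, sum_ite_eq, mem_Icc]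
  rcases Nat.eq_zero_or_pos m with rfl | hm
  · rw [HVP_coeff_zero, if_neg (by omega), if_neg (by omega)]
  by_cases hmn : m ≤ n
  · rw [if_pos ⟨hm, hmn⟩, HVP_id_coeff hn hm]
  · rw [if_neg (by omega), HVP_id_coeff hn hm, Nat.choose_eq_zero_of_lt (by omega), Nat.cast_zero,
      mul_zero]
end

section
/- The double sequence given by a_{n,m} = C(n+m−1, 2m−1) for 1 ≤ m ≤ n and a_{n,m} = 0 otherwise is both horizontally and vertically log-concave: for every fixed n ≥ 1 and every m ≥ 1, a_{n,m}² ≥ a_{n,m−1}·a_{n,m+1}, and for every fixed m ≥ 1 and every n ≥ 2, a_{n,m}² ≥ a_{n−1,m}·a_{n+1,m}. -/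
/-!
With `N = n + m - 2`, a row segment `a_{n,m-1}, a_{n,m}, a_{n,m+1}` is
`C(N, k), C(N + 1, k + 2), C(N + 2, k + 4)` for `k = 2m - 3`, and a column segment
`a_{n-1,m}, a_{n,m}, a_{n+1,m}` is `C(N, k), C(N + 1, k), C(N + 2, k)` for `k = 2m - 1`.
In both cases the ratio of consecutive terms is explicit,
`C(N + 1, k + 2) / C(N, k) = (N + 1)(N - k) / ((k + 1)(k + 2))` and
`C(N + 1, k) / C(N, k) = (N + 1) / (N + 1 - k)`, and it decreases along the sequence,
which is log-concavity.
-/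

/-- The double sequence `a_{n,m} = C(n+m-1, 2m-1)` for `1 ≤ m ≤ n`, else `0`. -/
noncomputable def aBin (n m : ℕ) : ℝ :=
  if 1 ≤ m ∧ m ≤ n then (Nat.choose (n + m - 1) (2 * m - 1) : ℝ) else 0

theorem mul_le_sq_of_mul_eq_mul {R : Type*} [CommSemiring R] [LinearOrder R]
    [IsStrictOrderedRing R] [ExistsAddOfLE R] {a b c x y z w : R}
    (ha : a * x = b * y) (hc : c * w = b * z) (hxw : 0 < x * w) (h : y * z ≤ x * w) :
    a * c ≤ b ^ 2 := by
  refine le_of_mul_le_mul_right ?_ hxw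
  calc a * c * (x * w) = b ^ 2 * (y * z) := by linear_combination (c * w) * ha + b * y * hc
    _ ≤ b ^ 2 * (x * w) := mul_le_mul_of_nonneg_left h (sq_nonneg b)

namespace Nat

theorem choose_mul_choose_add_two_le_sq (n k : ℕ) :
    n.choose k * (n + 2).choose k ≤ (n + 1).choose k ^ 2 := by
  rcases lt_or_ge n k with hnk | hkn
  · simp [choose_eq_zero_of_lt hnk]
  refine mul_le_sq_of_mul_eq_mul (choose_mul_succ_eq n k)
    (choose_mul_succ_eq (n + 1) k).symm (mul_pos (by omega) (by omega)) ?_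
  obtain ⟨a, rfl⟩ := exists_add_of_le hkn
  rw [show k + a + 1 - k = a + 1 by omega, show k + a + 1 + 1 - k = a + 2 by omega]
  nlinarith

theorem choose_mul_add_one_mul_sub_eq (n k : ℕ) :
    n.choose k * ((n + 1) * (n - k)) = (n + 1).choose (k + 2) * ((k + 1) * (k + 2)) := by
  calc n.choose k * ((n + 1) * (n - k)) = (n + 1) * (n.choose k * (n - k)) := by ring
    _ = (n + 1) * (n.choose (k + 1) * (k + 1)) := by rw [choose_succ_right_eq]
    _ = (n + 1) * n.choose (k + 1) * (k + 1) := by ring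
    _ = (n + 1).choose (k + 2) * ((k + 1) * (k + 2)) := by rw [add_one_mul_choose_eq]; ring

theorem add_two_mul_sub_add_one_le (n k : ℕ) : (n + 2) * (n - (k + 1)) ≤ (n + 1) * (n - k) := by
  rcases lt_or_ge n (k + 1) with hnk | hkn
  · simp [Nat.sub_eq_zero_of_le hnk.le]
  obtain ⟨a, rfl⟩ := exists_add_of_le hkn
  rw [show k + 1 + a - (k + 1) = a by omega, show k + 1 + a - k = a + 1 by omega]
  nlinarith

theorem choose_mul_choose_add_two_add_four_le_sq (n k : ℕ) :
    n.choose k * (n + 2).choose (k + 4) ≤ (n + 1).choose (k + 2) ^ 2 := by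
  rcases lt_or_ge k n with hkn | hnk
  · refine mul_le_sq_of_mul_eq_mul (choose_mul_add_one_mul_sub_eq n k)
      (choose_mul_add_one_mul_sub_eq (n + 1) (k + 2)).symm ?_ ?_
    · have : 0 < n - k := Nat.sub_pos_of_lt hkn
      positivity
    · calc (k + 1) * (k + 2) * ((n + 1 + 1) * (n + 1 - (k + 2)))
          = (k + 1) * (k + 2) * ((n + 2) * (n - (k + 1))) := by congr 2; omega
        _ ≤ (k + 3) * (k + 4) * ((n + 1) * (n - k)) :=
          Nat.mul_le_mul (by nlinarith) (add_two_mul_sub_add_one_le n k)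
        _ = (n + 1) * (n - k) * ((k + 2 + 1) * (k + 2 + 2)) := by ring
  · simp [choose_eq_zero_of_lt (show n + 2 < k + 4 by omega)]

end Nat

theorem aBin_zero_right (n : ℕ) : aBin n 0 = 0 := by simp [aBin]

/-- For `m > n` the binomial coefficient `C(n + m - 1, 2m - 1)` vanishes anyway. -/
theorem aBin_succ (n j : ℕ) : aBin n (j + 1) = (n + j).choose (2 * j + 1) := by
  unfold aBin
  split_ifs with h
  · rfl
  · rw [Nat.choose_eq_zero_of_lt (by omega), Nat.cast_zero]

/-- The double sequence `C(n+m-1, 2m-1)` (supported on `1 ≤ m ≤ n`) is horizontally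
and vertically log-concave. -/
theorem binomial_double_sequence_logConcave :
    (∀ n m : ℕ, 1 ≤ n → 1 ≤ m →
      aBin n m ^ 2 ≥ aBin n (m - 1) * aBin n (m + 1)) ∧
    (∀ n m : ℕ, 1 ≤ m → 2 ≤ n →
      aBin n m ^ 2 ≥ aBin (n - 1) m * aBin (n + 1) m) := by
  constructor
  · rintro n (_ | _ | j) - hm
    · omega
    · rw [aBin_zero_right, zero_mul]; positivity
    · have h := Nat.choose_mul_choose_add_two_add_four_le_sq (n + j) (2 * j + 1)
      simp only [add_tsub_cancel_right, aBin_succ]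
      exact_mod_cast h
  · rintro (_ | _ | i) (_ | j) hm hn
    all_goals try omega
    have h := Nat.choose_mul_choose_add_two_le_sq (i + j + 1) (2 * j + 1)
    simp only [add_tsub_cancel_right, aBin_succ, add_right_comm _ 1 j]
    exact_mod_cast h
end

section
/- For every integer n ≥ 5 one has (n²−1)·H(n−1)² < n²·H(n)·H(n−2), where H(k) = ∑_{j=1}^k 1/j is the k-th harmonic number. Equivalently, the vertical log-concavity inequality for A^{1,id} at m = 2 fails for all n ≥ 5: (H(n−1)/n)² < (H(n)/(n+1))·(H(n−2)/(n−1)). -/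
/-! Writing `H = H(n-1)`, so that `H(n) = H + 1/n` and `H(n-2) = H - 1/(n-1)`, one has
`n² H(n) H(n-2) - (n² - 1) H² = ((n-1) H² - n (H + 1)) / (n-1)`.
The numerator is positive as soon as `n ≥ 5`, because then `H ≥ H(4) = 25/12`. -/

section OrderedField

variable {K : Type*} [Field K] [LinearOrder K] [IsStrictOrderedRing K]

lemma mul_add_one_lt_sub_one_mul_sq {x h : K} (hx : 5 ≤ x) (hh : 25 / 12 ≤ h) :
    x * (h + 1) < (x - 1) * h ^ 2 := by
  have hq : 0 < h ^ 2 - h - 1 := by nlinarith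
  nlinarith [mul_nonneg (sub_nonneg.2 hx) hq.le]

lemma sub_one_mul_sq_lt_sq_mul_add_inv_mul_sub_inv {x h : K} (hx : 1 < x)
    (hh : x * (h + 1) < (x - 1) * h ^ 2) :
    (x ^ 2 - 1) * h ^ 2 < x ^ 2 * (h + x⁻¹) * (h - (x - 1)⁻¹) := by
  have hx₁ : x - 1 ≠ 0 := sub_ne_zero.2 hx.ne'
  have hx₀ : x ≠ 0 := by positivity
  have gap : x ^ 2 * (h + x⁻¹) * (h - (x - 1)⁻¹) - (x ^ 2 - 1) * h ^ 2
      = ((x - 1) * h ^ 2 - x * (h + 1)) / (x - 1) := by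
    field_simp
    ring
  have gap_pos := div_pos (sub_pos.2 hh) (sub_pos.2 hx)
  linarith

lemma div_sq_lt_div_mul_div_of_sq_sub_one_mul_lt {x h a b : K} (hx : 1 < x)
    (hlt : (x ^ 2 - 1) * h ^ 2 < x ^ 2 * a * b) :
    (h / x) ^ 2 < a / (x + 1) * (b / (x - 1)) := by
  have hx₀ : 0 < x := by linarith
  have hx₁ : 0 < x - 1 := sub_pos.2 hx
  rw [div_pow, div_mul_div_comm, div_lt_div_iff₀ (by positivity) (by positivity)]
  linarith

end OrderedField

lemma harmonic_monotone : Monotone harmonic :=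
  monotone_nat_of_le_succ fun n => by
    rw [harmonic_succ]
    exact le_add_of_nonneg_right (by positivity)

lemma harmonic_eq_harmonic_sub_one_add_inv {n : ℕ} (hn : 1 ≤ n) :
    harmonic n = harmonic (n - 1) + (n : ℚ)⁻¹ := by
  obtain ⟨m, rfl⟩ := Nat.exists_eq_add_of_le' hn
  simp [harmonic_succ]

lemma harmonic_sub_two_eq {n : ℕ} (hn : 2 ≤ n) :
    harmonic (n - 2) = harmonic (n - 1) - ((n : ℚ) - 1)⁻¹ := by
  obtain ⟨m, rfl⟩ := Nat.exists_eq_add_of_le' hn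
  simp only [add_tsub_cancel_right, Nat.add_one_sub_one, harmonic_succ, Nat.cast_add,
    Nat.cast_one, Nat.cast_ofNat]
  ring

/-- For every `n ≥ 5` one has `(n²-1)·H(n-1)² < n²·H(n)·H(n-2)`; equivalently, the
vertical log-concavity inequality for `A^{1,id}` at `m = 2` fails for all `n ≥ 5`:
`(H(n-1)/n)² < (H(n)/(n+1))·(H(n-2)/(n-1))`. -/
theorem harmonic_vertical_fails_m_two (n : ℕ) (hn : 5 ≤ n) :
    ((n : ℚ) ^ 2 - 1) * harmonic (n - 1) ^ 2 < (n : ℚ) ^ 2 * harmonic n * harmonic (n - 2) ∧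
    (harmonic (n - 1) / (n : ℚ)) ^ 2
      < (harmonic n / ((n : ℚ) + 1)) * (harmonic (n - 2) / ((n : ℚ) - 1)) := by
  have hx : (1 : ℚ) < n := by exact_mod_cast (by omega : 1 < n)
  have hH : 25 / 12 ≤ harmonic (n - 1) :=
    calc (25 / 12 : ℚ) = harmonic 4 := by norm_num [harmonic_succ]
      _ ≤ harmonic (n - 1) := harmonic_monotone (by omega)
  have hlt := sub_one_mul_sq_lt_sq_mul_add_inv_mul_sub_inv hx
    (mul_add_one_lt_sub_one_mul_sq (by exact_mod_cast hn) hH)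
  rw [← harmonic_eq_harmonic_sub_one_add_inv (by omega),
    ← harmonic_sub_two_eq (by omega)] at hlt
  exact ⟨hlt, div_sq_lt_div_mul_div_of_sq_sub_one_mul_lt hx hlt⟩
end

section
/- For every fixed integer m ≥ 1, the sequence n ↦ S(n,m)/n! is eventually not log-concave: there exists N such that for all n ≥ N, (S(n,m)/n!)² < (S(n−1,m)/(n−1)!)·(S(n+1,m)/(n+1)!), where S(n,m) are the unsigned Stirling numbers of the first kind. -/
/-!
Write `S(n, m)` for the Stirling numbers and `n = k + 1`. Clearing factorials, the inequality reads
`(k+2) S(k+1,m)² < (k+1) S(k,m) S(k+2,m)`, and after expanding with the recurrence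
`S(n+1,m) = n S(n,m) + S(n,m-1)` it holds as soon as `S(k,m) ≥ 2 S(k,m-1)`, with `S(k,m) > 0`.

So it suffices that `S(n,m-1)/S(n,m) → 0`, which is proved by induction on `m`. As long as
`S(n,m+1) < t S(n,m)`, the recurrence raises the ratio `S(n,m+1)/S(n,m)` by at least
`1/(2(n+1))` at each step, so divergence of the harmonic series forces `t S(n,m) ≤ S(n,m+1)`
at some `n`, and the recurrence then keeps it true for all larger `n`.
-/

/-- Unsigned Stirling numbers of the first kind: `x(x+1)⋯(x+n-1) = ∑_m S(n,m) x^m`. -/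
noncomputable def stirlingFirst (n m : ℕ) : ℕ := (ascPochhammer ℕ n).coeff m

open Filter

theorem stirlingFirst_eq_nat_stirlingFirst (n m : ℕ) :
    stirlingFirst n m = Nat.stirlingFirst n m := by
  induction n generalizing m with
  | zero => cases m <;> simp [stirlingFirst, Polynomial.coeff_one]
  | succ n ih =>
    cases m with
    | zero =>
      simp [stirlingFirst, Polynomial.coeff_zero_eq_eval_zero]
    | succ m =>
      rw [Nat.stirlingFirst_succ_succ, ← ih, ← ih, stirlingFirst, ascPochhammer_succ_right,
        mul_add, Polynomial.coeff_add, Polynomial.coeff_mul_X, ← Polynomial.C_eq_natCast,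
        Polynomial.coeff_mul_C, stirlingFirst, stirlingFirst, Nat.cast_id, add_comm, mul_comm]

theorem Nat.mul_stirlingFirst_le_succ (n k : ℕ) :
    n * Nat.stirlingFirst n k ≤ Nat.stirlingFirst (n + 1) k := by
  rcases n with _ | n
  · simp
  rcases k with _ | k
  · simp
  · rw [Nat.stirlingFirst_succ_succ]
    exact Nat.le_add_right _ _

theorem Nat.stirlingFirst_pos {n k : ℕ} (hk : 0 < k) (hkn : k ≤ n) :
    0 < Nat.stirlingFirst n k := by
  induction n, hkn using Nat.le_induction with
  | base => simp [Nat.stirlingFirst_self]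
  | succ n hkn ih =>
    calc 0 < n * Nat.stirlingFirst n k := Nat.mul_pos (by omega) ih
      _ ≤ _ := Nat.mul_stirlingFirst_le_succ n k

theorem Filter.Frequently.eventually_of_step {p : ℕ → Prop} (hp : ∃ᶠ n in atTop, p n)
    (hstep : ∀ᶠ n in atTop, p n → p (n + 1)) : ∀ᶠ n in atTop, p n := by
  obtain ⟨N, hN⟩ := eventually_atTop.1 hstep
  obtain ⟨n₀, hn₀, hp₀⟩ := frequently_atTop.1 hp N
  refine eventually_atTop.2 ⟨n₀, fun n hn => ?_⟩
  induction n, hn using Nat.le_induction with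
  | base => exact hp₀
  | succ n hn ih => exact hN n (hn₀.trans hn) ih

theorem tendsto_atTop_of_eventually_add_one_div_le {r : ℕ → ℝ} {c : ℝ} (hc : 0 < c)
    (h : ∀ᶠ n in atTop, r n + 1 / (c * (n + 1)) ≤ r (n + 1)) : Tendsto r atTop atTop := by
  set H : ℕ → ℝ := fun n => ∑ i ∈ Finset.range n, 1 / ((i : ℝ) + 1)
  obtain ⟨N, hN⟩ := eventually_atTop.1 h
  have hlow : ∀ n ≥ N, r N + c⁻¹ * (H n - H N) ≤ r n := by
    intro n hn
    induction n, hn using Nat.le_induction with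
    | base => simp
    | succ n hn ih =>
      have hH : H (n + 1) = H n + 1 / ((n : ℝ) + 1) := Finset.sum_range_succ _ _
      have := hN n hn
      have hdiff : c⁻¹ * (H (n + 1) - H N) = c⁻¹ * (H n - H N) + 1 / (c * (n + 1)) := by
        rw [hH]; field_simp; ring
      linarith
  refine tendsto_atTop_mono' _ (eventually_atTop.2 ⟨N, hlow⟩) ?_
  exact tendsto_atTop_add_const_left _ _
    ((Real.tendsto_sum_range_one_div_nat_succ_atTop.atTop_add tendsto_const_nhds).const_mul_atTop
      (inv_pos.2 hc))

theorem div_add_one_div_le_div_of_recurrence {x a b c : ℝ} (hx : 0 < x) (hb : 0 < b)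
    (hc : 0 ≤ c) (hcb : c ≤ b) (habc : 2 * (a * c) ≤ b ^ 2) :
    a / b + 1 / (2 * (x + 1)) ≤ (x * a + b) / (x * b + c) := by
  have hx1 : 0 < 2 * (x + 1) := by linarith
  rw [div_add_div _ _ hb.ne' hx1.ne', div_le_div_iff₀ (by positivity) (by positivity)]
  nlinarith [mul_le_mul_of_nonneg_left hcb hb.le, mul_pos hx hb]

-- The difference of the two sides is
-- `(A - 2B)(kA + (k+1)B) + kB² + (k+1)A(E - kB) ≥ kA²/4`.
theorem sq_mul_lt_of_recurrence {k A B E : ℝ} (hk : 0 < k) (hA : 0 < A) (hB : 0 ≤ B)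
    (hBA : 2 * B ≤ A) (hE : k * B ≤ E) :
    (k + 2) * (k * A + B) ^ 2 < (k + 1) * (A * ((k + 1) * (k * A + B) + E)) := by
  have hD : 0 ≤ A - 2 * B := sub_nonneg.2 hBA
  nlinarith [mul_le_mul_of_nonneg_left hE (by positivity : 0 ≤ (k + 1) * A),
    mul_pos hk (mul_pos hA hA), mul_nonneg hk.le (mul_nonneg hB hD),
    mul_nonneg hk.le (mul_nonneg hD hD), mul_nonneg hB hD]

theorem div_factorial_sq_lt_iff (x : ℕ → ℝ) (k : ℕ) :
    (x (k + 1) / (k + 1).factorial) ^ 2 < x k / k.factorial * (x (k + 2) / (k + 2).factorial) ↔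
      (k + 2) * x (k + 1) ^ 2 < (k + 1) * (x k * x (k + 2)) := by
  have hf : (0 : ℝ) < k.factorial := by exact_mod_cast k.factorial_pos
  simp only [Nat.factorial_succ]
  push_cast
  rw [div_pow, div_mul_div_comm, div_lt_div_iff₀ (by positivity) (by positivity),
    show x (k + 1) ^ 2 * (k.factorial * ((k + 1 + 1) * ((k + 1) * k.factorial))) =
      ((k + 1) * k.factorial ^ 2) * ((k + 2) * x (k + 1) ^ 2) by ring,
    show x k * x (k + 2) * ((k + 1) * k.factorial) ^ 2 =
      ((k + 1) * k.factorial ^ 2) * ((k + 1) * (x k * x (k + 2))) by ring]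
  exact mul_lt_mul_iff_of_pos_left (by positivity)

theorem Nat.frequently_mul_stirlingFirst_le {j t : ℕ}
    (h2t : ∀ᶠ n in atTop, 2 * t * Nat.stirlingFirst n j ≤ Nat.stirlingFirst n (j + 1))
    (h1 : ∀ᶠ n in atTop, Nat.stirlingFirst n j ≤ Nat.stirlingFirst n (j + 1)) :
    ∃ᶠ n in atTop, t * Nat.stirlingFirst n (j + 1) ≤ Nat.stirlingFirst n (j + 2) := by
  by_contra hbelow
  rw [not_frequently] at hbelow
  set r : ℕ → ℝ := fun n => Nat.stirlingFirst n (j + 2) / Nat.stirlingFirst n (j + 1)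
  have hpos : ∀ n ≥ j + 1, (0 : ℝ) < Nat.stirlingFirst n (j + 1) := fun n hn => by
    exact_mod_cast Nat.stirlingFirst_pos j.succ_pos hn
  have hr_lt : ∀ᶠ n in atTop, r n < t := by
    filter_upwards [hbelow, eventually_ge_atTop (j + 1)] with n hn hjn
    rw [div_lt_iff₀ (hpos n hjn)]
    exact_mod_cast not_le.1 hn
  have hr_top : Tendsto r atTop atTop := by
    refine tendsto_atTop_of_eventually_add_one_div_le two_pos ?_
    filter_upwards [hbelow, h2t, h1, eventually_ge_atTop (j + 1)] with n hn hn2t hn1 hjn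
    have hsq : 2 * (Nat.stirlingFirst n (j + 2) * Nat.stirlingFirst n j) ≤
        Nat.stirlingFirst n (j + 1) ^ 2 :=
      calc 2 * (Nat.stirlingFirst n (j + 2) * Nat.stirlingFirst n j)
          ≤ 2 * (t * Nat.stirlingFirst n (j + 1) * Nat.stirlingFirst n j) := by
            gcongr; exact (not_le.1 hn).le
        _ = Nat.stirlingFirst n (j + 1) * (2 * t * Nat.stirlingFirst n j) := by ring
        _ ≤ Nat.stirlingFirst n (j + 1) ^ 2 := by rw [sq]; gcongr
    have := div_add_one_div_le_div_of_recurrence (x := n) (a := Nat.stirlingFirst n (j + 2))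
      (Nat.cast_pos.2 (by omega)) (hpos n hjn) (Nat.cast_nonneg _) (by exact_mod_cast hn1)
      (by exact_mod_cast hsq)
    simp only [r, Nat.stirlingFirst_succ_succ]
    push_cast
    exact this
  obtain ⟨n, hn_lt, hn_ge⟩ := (hr_lt.and (hr_top.eventually_ge_atTop t)).exists
  exact hn_lt.not_ge hn_ge

theorem Nat.eventually_mul_stirlingFirst_le (j t : ℕ) :
    ∀ᶠ n in atTop, t * Nat.stirlingFirst n j ≤ Nat.stirlingFirst n (j + 1) := by
  induction j generalizing t with
  | zero =>
    filter_upwards [eventually_ge_atTop 1] with n hn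
    obtain ⟨n, rfl⟩ := Nat.exists_eq_add_of_le' hn
    simp
  | succ j ih =>
    refine (Nat.frequently_mul_stirlingFirst_le (ih (2 * t))
      ((ih 1).mono fun n h => by rwa [one_mul] at h)).eventually_of_step ?_
    filter_upwards [ih t] with n ht hn
    rw [Nat.stirlingFirst_succ_succ n (j + 1), Nat.stirlingFirst_succ_succ n j, mul_add,
      mul_left_comm]
    gcongr

theorem Nat.eventually_stirlingFirst_sq_mul_lt {m : ℕ} (hm : 1 ≤ m) :
    ∀ᶠ k : ℕ in atTop, ((k : ℝ) + 2) * (Nat.stirlingFirst (k + 1) m : ℝ) ^ 2 <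
      (k + 1) * (Nat.stirlingFirst k m * Nat.stirlingFirst (k + 2) m) := by
  obtain ⟨j, rfl⟩ := Nat.exists_eq_add_of_le' hm
  filter_upwards [Nat.eventually_mul_stirlingFirst_le j 2, eventually_ge_atTop (j + 1)]
    with k h2 hk
  have hrec₁ : (Nat.stirlingFirst (k + 1) (j + 1) : ℝ) =
      k * Nat.stirlingFirst k (j + 1) + Nat.stirlingFirst k j := by
    exact_mod_cast Nat.stirlingFirst_succ_succ k j
  have hrec₂ : (Nat.stirlingFirst (k + 2) (j + 1) : ℝ) =
      (k + 1) * Nat.stirlingFirst (k + 1) (j + 1) + Nat.stirlingFirst (k + 1) j := by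
    rw [Nat.stirlingFirst_succ_succ (k + 1) j]
    push_cast
    ring
  rw [hrec₂, hrec₁]
  exact sq_mul_lt_of_recurrence (Nat.cast_pos.2 (by omega))
    (by exact_mod_cast Nat.stirlingFirst_pos j.succ_pos hk) (Nat.cast_nonneg _)
    (by exact_mod_cast h2) (by exact_mod_cast Nat.mul_stirlingFirst_le_succ k j)

/-- For every fixed `m ≥ 1` the sequence `n ↦ S(n,m)/n!` is eventually not
log-concave: for all large `n`,
`(S(n,m)/n!)² < (S(n-1,m)/(n-1)!)·(S(n+1,m)/(n+1)!)`. -/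
theorem stirling_eventually_not_logConcave (m : ℕ) (hm : 1 ≤ m) :
    ∃ N : ℕ, ∀ n, N ≤ n →
      ((stirlingFirst n m : ℝ) / (Nat.factorial n : ℝ)) ^ 2
        < ((stirlingFirst (n - 1) m : ℝ) / (Nat.factorial (n - 1) : ℝ)) *
            ((stirlingFirst (n + 1) m : ℝ) / (Nat.factorial (n + 1) : ℝ)) := by
  obtain ⟨N, hN⟩ := eventually_atTop.1 (Nat.eventually_stirlingFirst_sq_mul_lt hm)
  refine ⟨N + 1, fun n hn => ?_⟩
  obtain ⟨k, rfl⟩ := Nat.exists_eq_add_of_le' (Nat.le_of_add_left_le hn)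
  simp only [Nat.add_sub_cancel, stirlingFirst_eq_nat_stirlingFirst]
  exact (div_factorial_sq_lt_iff (fun n => (Nat.stirlingFirst n m : ℝ)) k).2 (hN k (by omega))
end
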